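/- Let (X,Q,π) be a finite Markov chain with |X| ≥ 2 whose underlying graph (x ∼ y iff x ≠ y and Q(x,y) > 0) is connected. Then inf { ⟨𝟏, Γ₂ f⟩_π / ⟨𝟏, Γ f⟩_π : f : X → ℝ with ⟨𝟏, Γ f⟩_π > 0 } = λ₁(X), the smallest positive eigenvalue of −Δ (here 𝟏 denotes the constant function 1, so ⟨𝟏, g⟩_π = Σ_x g(x)π(x)). In other words, the curvature K_∞(𝟏_X) of the equilibrium measure equals λ₁(X). -/

import Mathlib

open Finset

/-- The Markov chain Laplacian `Δf(x) = ∑_y Q(x,y)(f(y) - f(x))`. -/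
def lap {X : Type*} [Fintype X] (Q : X → X → ℝ) (f : X → ℝ) : X → ℝ :=
  fun x => ∑ y, Q x y * (f y - f x)

/-- `Γ(f,g) := ½(Δ(fg) - fΔg - gΔf)`. -/
noncomputable def gamBil {X : Type*} [Fintype X] (Q : X → X → ℝ) (f g : X → ℝ) : X → ℝ :=
  fun x => (1/2) * (lap Q (fun z => f z * g z) x - f x * lap Q g x - g x * lap Q f x)

/-- `Γf := Γ(f,f)`. -/
noncomputable def gam {X : Type*} [Fintype X] (Q : X → X → ℝ) (f : X → ℝ) : X → ℝ :=
  gamBil Q f f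

/-- `Γ₂f := ½Δ(Γf) - Γ(f, Δf)`. -/
noncomputable def gam2 {X : Type*} [Fintype X] (Q : X → X → ℝ) (f : X → ℝ) : X → ℝ :=
  fun x => (1/2) * lap Q (gam Q f) x - gamBil Q f (lap Q f) x

open scoped RealInnerProductSpace

/-!
Reversibility makes `-Δ` self-adjoint on `L²(π)` and `Σ_x Δg(x) π(x) = 0`, so
`⟨𝟏, Γf⟩_π = ⟨f, -Δf⟩_π` and `⟨𝟏, Γ₂f⟩_π = ‖Δf‖²_π`. In an orthonormal eigenbasis of `-Δ`
(eigenvalues `μᵢ ≥ 0` because `Γ ≥ 0`) the quotient is `Σ μᵢ² cᵢ² / Σ μᵢ cᵢ²`, and every `μᵢ > 0`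
is at least `λ₁`; so the quotient is at least `λ₁`, with equality at a `λ₁`-eigenfunction.
The eigenbasis is obtained by conjugating with `f ↦ √π f`, an isometry `L²(π) ≅ ℓ²(X)`.
-/

theorem LinearMap.IsSymmetric.mul_inner_map_self_le_inner_map_map
    {E : Type*} [NormedAddCommGroup E] [InnerProductSpace ℝ E] [FiniteDimensional ℝ E]
    {T : E →ₗ[ℝ] E} (hT : T.IsSymmetric) {lam : ℝ}
    (hev : ∀ (μ : ℝ) (w : E), w ≠ 0 → T w = μ • w → 0 ≤ μ * (μ - lam)) (v : E) :
    lam * ⟪v, T v⟫ ≤ ⟪T v, T v⟫ := by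
  set b := hT.eigenvectorBasis rfl
  set μ := hT.eigenvalues (rfl : Module.finrank ℝ E = _)
  have hinner : ∀ u w : E, ⟪u, w⟫ = ∑ i, b.repr u i * b.repr w i := fun u w => by
    rw [← b.repr.inner_map_map, PiLp.inner_apply]
    simp [mul_comm]
  rw [hinner, hinner, mul_sum]
  refine sum_le_sum fun i _ => ?_
  have hμ := hev (μ i) (b i) (b.orthonormal.ne_zero i) (hT.apply_eigenvectorBasis rfl i)
  rw [hT.eigenvectorBasis_apply_self_apply rfl v i, RCLike.ofReal_real_eq_id, id_eq]
  nlinarith [mul_nonneg hμ (sq_nonneg (b.repr v i))]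

section
variable {X : Type*}

noncomputable def sqrtWeightEquiv {pr : X → ℝ} (hpr : ∀ x, 0 < pr x) :
    (X → ℝ) ≃ₗ[ℝ] EuclideanSpace ℝ X :=
  (LinearEquiv.piCongrRight fun x =>
    LinearEquiv.smulOfNeZero ℝ ℝ (√(pr x)) (Real.sqrt_pos.2 (hpr x)).ne').trans
    (WithLp.linearEquiv 2 ℝ (X → ℝ)).symm

theorem sqrtWeightEquiv_apply {pr : X → ℝ} (hpr : ∀ x, 0 < pr x) (f : X → ℝ) (x : X) :
    sqrtWeightEquiv hpr f x = √(pr x) * f x :=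
  rfl

theorem inner_sqrtWeightEquiv [Fintype X] {pr : X → ℝ} (hpr : ∀ x, 0 < pr x) (f g : X → ℝ) :
    ⟪sqrtWeightEquiv hpr f, sqrtWeightEquiv hpr g⟫ = ∑ x, f x * g x * pr x := by
  refine (PiLp.inner_apply _ _).trans (sum_congr rfl fun x _ => ?_)
  rw [sqrtWeightEquiv_apply, sqrtWeightEquiv_apply, RCLike.inner_apply, conj_trivial]
  linear_combination f x * g x * Real.mul_self_sqrt (hpr x).le

theorem mul_sum_mul_apply_le_sum_apply_sq [Fintype X] {pr : X → ℝ} (hpr : ∀ x, 0 < pr x)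
    {L : (X → ℝ) →ₗ[ℝ] (X → ℝ)}
    (hL : ∀ f g, ∑ x, L f x * g x * pr x = ∑ x, f x * L g x * pr x) {lam : ℝ}
    (hev : ∀ (μ : ℝ) (f : X → ℝ), f ≠ 0 → L f = μ • f → 0 ≤ μ * (μ - lam)) (f : X → ℝ) :
    lam * ∑ x, f x * L f x * pr x ≤ ∑ x, L f x ^ 2 * pr x := by
  set U := sqrtWeightEquiv hpr
  set T := U.conj L
  have hTU : ∀ g, T (U g) = U (L g) := fun g => by simp [T]
  have hT : T.IsSymmetric := fun v w => by
    obtain ⟨f, rfl⟩ := U.surjective v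
    obtain ⟨g, rfl⟩ := U.surjective w
    rw [hTU, hTU, inner_sqrtWeightEquiv, inner_sqrtWeightEquiv, hL]
  have hevT : ∀ (μ : ℝ) (w : EuclideanSpace ℝ X), w ≠ 0 → T w = μ • w → 0 ≤ μ * (μ - lam) := by
    intro μ w hw hTw
    obtain ⟨g, rfl⟩ := U.surjective w
    refine hev μ g (by simpa using hw) (U.injective ?_)
    rw [← hTU, hTw, map_smul]
  have := hT.mul_inner_map_self_le_inner_map_map hevT (U f)
  rw [hTU, inner_sqrtWeightEquiv, inner_sqrtWeightEquiv] at this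
  simpa only [sq] using this

end

section
variable {X : Type*} [Fintype X] {Q : X → X → ℝ} {pr : X → ℝ}

def lapLin (Q : X → X → ℝ) : (X → ℝ) →ₗ[ℝ] (X → ℝ) where
  toFun := lap Q
  map_add' f g := funext fun x => by
    simp only [lap, Pi.add_apply, ← sum_add_distrib]
    exact sum_congr rfl fun y _ => by ring
  map_smul' c f := funext fun x => by
    simp only [lap, Pi.smul_apply, smul_eq_mul, RingHom.id_apply, mul_sum]
    exact sum_congr rfl fun y _ => by ring

@[simp]
theorem lapLin_apply (f : X → ℝ) : lapLin Q f = lap Q f :=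
  rfl

theorem lap_const (c : ℝ) : lap Q (fun _ => c) = 0 := by
  ext x
  simp [lap]

theorem sum_mul_lap_mul_comm (hrev : ∀ x y, pr x * Q x y = pr y * Q y x) (f g : X → ℝ) :
    ∑ x, f x * lap Q g x * pr x = ∑ x, g x * lap Q f x * pr x := by
  have expand : ∀ f g : X → ℝ, ∑ x, f x * lap Q g x * pr x
      = ∑ x, ∑ y, pr x * Q x y * f x * g y - ∑ x, ∑ y, pr x * Q x y * f x * g x := by
    intro f g
    simp only [lap, ← sum_sub_distrib, sum_mul, mul_sum]
    exact sum_congr rfl fun x _ => sum_congr rfl fun y _ => by ring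
  rw [expand, expand, sum_comm (f := fun x y => pr x * Q x y * g x * f y)]
  congr 1
  · exact sum_congr rfl fun x _ => sum_congr rfl fun y _ => by rw [hrev]; ring
  · exact sum_congr rfl fun x _ => sum_congr rfl fun y _ => by ring

theorem sum_lap_mul_eq_zero (hrev : ∀ x y, pr x * Q x y = pr y * Q y x) (g : X → ℝ) :
    ∑ x, lap Q g x * pr x = 0 := by
  simpa [lap_const] using sum_mul_lap_mul_comm hrev (fun _ => 1) g

theorem sum_gamBil_mul (hrev : ∀ x y, pr x * Q x y = pr y * Q y x) (f g : X → ℝ) :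
    ∑ x, gamBil Q f g x * pr x = -∑ x, f x * lap Q g x * pr x := by
  have expand : ∀ x, gamBil Q f g x * pr x = 1 / 2 * (lap Q (fun z => f z * g z) x * pr x)
      - 1 / 2 * (f x * lap Q g x * pr x) - 1 / 2 * (g x * lap Q f x * pr x) := fun x => by
    simp only [gamBil]; ring
  simp only [expand, sum_sub_distrib, ← mul_sum]
  rw [sum_lap_mul_eq_zero hrev, sum_mul_lap_mul_comm hrev g f]
  ring

theorem sum_gam_mul (hrev : ∀ x y, pr x * Q x y = pr y * Q y x) (f : X → ℝ) :
    ∑ x, gam Q f x * pr x = -∑ x, f x * lap Q f x * pr x :=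
  sum_gamBil_mul hrev f f

theorem sum_gam2_mul (hrev : ∀ x y, pr x * Q x y = pr y * Q y x) (f : X → ℝ) :
    ∑ x, gam2 Q f x * pr x = ∑ x, lap Q f x ^ 2 * pr x := by
  have expand : ∀ x, gam2 Q f x * pr x
      = 1 / 2 * (lap Q (gam Q f) x * pr x) - gamBil Q f (lap Q f) x * pr x := fun x => by
    simp only [gam2]; ring
  simp only [expand, sum_sub_distrib, ← mul_sum]
  rw [sum_lap_mul_eq_zero hrev, sum_gamBil_mul hrev, sum_mul_lap_mul_comm hrev f]
  simp only [sq]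
  ring

theorem gam_apply (f : X → ℝ) (x : X) : gam Q f x = 1 / 2 * ∑ y, Q x y * (f y - f x) ^ 2 := by
  simp only [gam, gamBil, lap, mul_sum, ← sum_sub_distrib]
  exact sum_congr rfl fun y _ => by ring

theorem gam_nonneg (hQ : ∀ x y, 0 ≤ Q x y) (f : X → ℝ) (x : X) : 0 ≤ gam Q f x := by
  rw [gam_apply]
  exact mul_nonneg (by norm_num) (sum_nonneg fun y _ => mul_nonneg (hQ x y) (sq_nonneg _))

theorem sum_sq_mul_pos (hpr : ∀ x, 0 < pr x) {f : X → ℝ} (hf : f ≠ 0) :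
    0 < ∑ x, f x ^ 2 * pr x := by
  obtain ⟨x, hx⟩ := Function.ne_iff.1 hf
  exact sum_pos' (fun x _ => mul_nonneg (sq_nonneg _) (hpr x).le)
    ⟨x, mem_univ x, mul_pos (pow_two_pos_of_ne_zero hx) (hpr x)⟩

section Eigenfunction
variable (hrev : ∀ x y, pr x * Q x y = pr y * Q y x) {μ : ℝ} {f : X → ℝ}
  (hf : ∀ x, lap Q f x = -(μ * f x))
include hrev hf

theorem sum_gam_mul_of_lap_eq : ∑ x, gam Q f x * pr x = μ * ∑ x, f x ^ 2 * pr x := by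
  simp only [sum_gam_mul hrev, hf, mul_sum, ← sum_neg_distrib]
  exact sum_congr rfl fun x _ => by ring

theorem sum_gam2_mul_of_lap_eq : ∑ x, gam2 Q f x * pr x = μ ^ 2 * ∑ x, f x ^ 2 * pr x := by
  simp only [sum_gam2_mul hrev, hf, mul_sum]
  exact sum_congr rfl fun x _ => by ring

theorem nonneg_of_lap_eq_neg_mul (hQ : ∀ x y, 0 ≤ Q x y) (hpr : ∀ x, 0 < pr x) (hf0 : f ≠ 0) :
    0 ≤ μ := by
  have h : 0 ≤ ∑ x, gam Q f x * pr x :=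
    sum_nonneg fun x _ => mul_nonneg (gam_nonneg hQ f x) (hpr x).le
  rw [sum_gam_mul_of_lap_eq hrev hf] at h
  exact nonneg_of_mul_nonneg_left h (sum_sq_mul_pos hpr hf0)

end Eigenfunction

theorem mul_sum_gam_mul_le_sum_gam2_mul (hQ : ∀ x y, 0 ≤ Q x y) (hpr : ∀ x, 0 < pr x)
    (hrev : ∀ x y, pr x * Q x y = pr y * Q y x) {lam : ℝ}
    (hlam_min : ∀ mu : ℝ, 0 < mu →
      (∃ f : X → ℝ, f ≠ 0 ∧ ∀ x, lap Q f x = -(mu * f x)) → lam ≤ mu) (f : X → ℝ) :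
    lam * ∑ x, gam Q f x * pr x ≤ ∑ x, gam2 Q f x * pr x := by
  have hL : ∀ f g : X → ℝ,
      ∑ x, (-lapLin Q) f x * g x * pr x = ∑ x, f x * (-lapLin Q) g x * pr x := fun f g => by
    simp only [LinearMap.neg_apply, lapLin_apply, Pi.neg_apply, neg_mul, mul_neg,
      sum_neg_distrib, neg_inj]
    rw [sum_mul_lap_mul_comm hrev f g]
    exact sum_congr rfl fun x _ => by ring
  have hev : ∀ (μ : ℝ) (f : X → ℝ), f ≠ 0 → -lapLin Q f = μ • f → 0 ≤ μ * (μ - lam) := by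
    intro μ f hf0 hf
    have hlap : ∀ x, lap Q f x = -(μ * f x) := fun x => by
      simpa [neg_eq_iff_eq_neg] using congrFun hf x
    rcases (nonneg_of_lap_eq_neg_mul hrev hlap hQ hpr hf0).eq_or_lt with rfl | hμ
    · simp
    · nlinarith [hlam_min μ hμ ⟨f, hf0, hlap⟩]
  rw [sum_gam2_mul hrev, sum_gam_mul hrev]
  simpa using mul_sum_mul_apply_le_sum_apply_sq hpr hL hev f

end

theorem lambdaOne_as_curvature
    {X : Type*} [Fintype X]
    (Q : X → X → ℝ) (pr : X → ℝ)
    (hQ : ∀ x y, 0 ≤ Q x y)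
    (hpr : ∀ x, 0 < pr x)
    (hrev : ∀ x y, pr x * Q x y = pr y * Q y x)
    (lam : ℝ) (hlam_pos : 0 < lam)
    (hlam_eig : ∃ f : X → ℝ, f ≠ 0 ∧ ∀ x, lap Q f x = -(lam * f x))
    (hlam_min : ∀ mu : ℝ, 0 < mu →
      (∃ f : X → ℝ, f ≠ 0 ∧ ∀ x, lap Q f x = -(mu * f x)) → lam ≤ mu) :
    sInf {r : ℝ | ∃ f : X → ℝ, 0 < ∑ x, gam Q f x * pr x ∧
        r = (∑ x, gam2 Q f x * pr x) / (∑ x, gam Q f x * pr x)} = lam := by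
  obtain ⟨g, hg0, hg⟩ := hlam_eig
  have hg2 := sum_sq_mul_pos hpr hg0
  refine IsLeast.csInf_eq ⟨⟨g, ?_, ?_⟩, ?_⟩
  · rw [sum_gam_mul_of_lap_eq hrev hg]
    positivity
  · rw [sum_gam_mul_of_lap_eq hrev hg, sum_gam2_mul_of_lap_eq hrev hg]
    field_simp
  · rintro r ⟨f, hfpos, rfl⟩
    rw [le_div_iff₀ hfpos]
    exact mul_sum_gam_mul_le_sum_gam2_mul hQ hpr hrev hlam_min f
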